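/- Let n ≥ 3 and let a be an integer with 1 ≤ a ≤ n − 1. Then every integer m with F_{2n} + F_{n+1} ≤ m < F_{2n} + F_{n+1} + F_a satisfies s(m) = 2 + s(m − F_{2n} − F_{n+1}), and hence s(m) ≤ 2 + ⌈(a − 1)/2⌉. In particular, every nonnegative integer r < F_a satisfies s(r) ≤ ⌈(a − 1)/2⌉. -/

import Mathlib

/-!
Adding `F (n + 1)` and `F (2 n)` to `r < F a` only places two new digits far above the digits
of `r`, with gaps of at least one on both sides. The resulting digit string is still a
Zeckendorf string, so by uniqueness it is the Zeckendorf expansion of `m`, which therefore has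
exactly two more summands than `r`. The bound on `s r` holds because a Zeckendorf string
supported on `[1, a - 1]` has at most `⌈(a - 1) / 2⌉` ones.
-/

open Filter MeasureTheory

/-- Fibonacci numbers normalized so that `F 1 = 1`, `F 2 = 2`. -/
def F (n : ℕ) : ℕ := Nat.fib (n + 1)

/-- `a` is the (unique) system of Zeckendorf digits: `a m j` is the `j`-th digit of `m`,
digits are `0` or `1`, indexed from `1`, no two consecutive digits are `1`,
digits vanish above `m`, and the digits decompose `m`. -/
def IsZeckendorf (a : ℕ → ℕ → ℕ) : Prop :=
  ∀ m : ℕ,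
    a m 0 = 0 ∧
    (∀ j, a m j ≤ 1) ∧
    (∀ j, ¬(a m j = 1 ∧ a m (j + 1) = 1)) ∧
    (∀ j, m < j → a m j = 0) ∧
    m = ∑ j ∈ Finset.Icc 1 m, a m j * F j

/-- Number of summands in the Zeckendorf decomposition of `m`. -/
def s (a : ℕ → ℕ → ℕ) (m : ℕ) : ℕ := ∑ j ∈ Finset.Icc 1 m, a m j

open Finset

lemma F_add_two (k : ℕ) : F (k + 2) = F (k + 1) + F k :=
  (Nat.fib_add_two (n := k + 1)).trans (add_comm _ _)

lemma F_mono : Monotone F := fun _ _ h => Nat.fib_mono (by omega)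

lemma sum_Icc_eq_of_eq_zero {M : Type*} [AddCommMonoid M] {f : ℕ → M} {K N : ℕ}
    (hf : ∀ j, K < j → f j = 0) (hKN : K ≤ N) :
    ∑ j ∈ Icc 1 N, f j = ∑ j ∈ Icc 1 K, f j :=
  (sum_subset (Icc_subset_Icc_right hKN) fun j hjN hjK => by
    simp only [mem_Icc] at hjN hjK
    exact hf j (by omega)).symm

lemma sum_add_single_mul {ι R : Type*} [DecidableEq ι] [Semiring R] {t : Finset ι} {k : ι}
    (hk : k ∈ t) (b w : ι → R) :
    ∑ j ∈ t, (b + Pi.single k 1 : ι → R) j * w j = ∑ j ∈ t, b j * w j + w k := by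
  simp [add_mul, sum_add_distrib, Pi.single_apply, hk]

lemma sum_add_single {ι R : Type*} [DecidableEq ι] [AddCommMonoid R] [One R] {t : Finset ι}
    {k : ι} (hk : k ∈ t) (b : ι → R) :
    ∑ j ∈ t, (b + Pi.single k 1 : ι → R) j = ∑ j ∈ t, b j + 1 := by
  simp [sum_add_distrib, sum_pi_single', hk]

structure IsZeckendorfDigits (b : ℕ → ℕ) : Prop where
  le_one : ∀ j, b j ≤ 1
  not_consecutive : ∀ j, ¬(b j = 1 ∧ b (j + 1) = 1)

namespace IsZeckendorfDigits

variable {b c : ℕ → ℕ}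

lemma eq_zero_of_succ_eq_one (hb : IsZeckendorfDigits b) {j : ℕ} (h : b (j + 1) = 1) :
    b j = 0 := by
  have := hb.le_one j
  have := hb.not_consecutive j
  omega

lemma sum_mul_F_lt (hb : IsZeckendorfDigits b) (k : ℕ) :
    ∑ j ∈ Icc 1 k, b j * F j < F (k + 1) := by
  induction k using Nat.strong_induction_on with
  | _ k ih =>
    match k with
    | 0 => simp [F]
    | 1 => have := hb.le_one 1; simp [F, Nat.fib_add_two]; omega
    | k + 2 =>
      rw [sum_Icc_succ_top (by omega)]
      rcases Nat.le_one_iff_eq_zero_or_eq_one.mp (hb.le_one (k + 2)) with h | h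
      · have := ih (k + 1) (by omega)
        have := F_mono (show k + 2 ≤ k + 3 by omega)
        simp only [h, add_assoc, Nat.reduceAdd] at *
        omega
      · rw [sum_Icc_succ_top (by omega), hb.eq_zero_of_succ_eq_one (j := k + 1) h]
        have := ih k (by omega)
        have := F_add_two (k + 1)
        simp only [h, add_assoc, Nat.reduceAdd] at *
        omega

lemma eq_of_sum_mul_F_eq (hb : IsZeckendorfDigits b) (hc : IsZeckendorfDigits c) (N : ℕ)
    (h : ∑ j ∈ Icc 1 N, b j * F j = ∑ j ∈ Icc 1 N, c j * F j) :
    ∀ j ∈ Icc 1 N, b j = c j := by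
  induction N with
  | zero => simp
  | succ N ih =>
    rw [sum_Icc_succ_top (by omega), sum_Icc_succ_top (by omega)] at h
    have hb' := hb.sum_mul_F_lt N
    have hc' := hc.sum_mul_F_lt N
    have htop : b (N + 1) = c (N + 1) := by
      rcases Nat.le_one_iff_eq_zero_or_eq_one.mp (hb.le_one (N + 1)) with h₁ | h₁ <;>
        rcases Nat.le_one_iff_eq_zero_or_eq_one.mp (hc.le_one (N + 1)) with h₂ | h₂ <;>
        rw [h₁, h₂] at h ⊢ <;> omega
    intro j hj
    rw [mem_Icc] at hj
    rcases Nat.lt_or_ge j (N + 1) with hjN | hjN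
    · rw [htop, Nat.add_right_cancel_iff] at h
      exact ih h j (mem_Icc.mpr ⟨hj.1, by omega⟩)
    · rwa [show j = N + 1 by omega]

lemma sum_le (hb : IsZeckendorfDigits b) (k : ℕ) : ∑ j ∈ Icc 1 k, b j ≤ (k + 1) / 2 := by
  induction k using Nat.strong_induction_on with
  | _ k ih =>
    match k with
    | 0 => simp
    | 1 => simpa using hb.le_one 1
    | k + 2 =>
      rw [sum_Icc_succ_top (by omega), sum_Icc_succ_top (by omega)]
      have := ih k (by omega)
      have := hb.not_consecutive (k + 1)
      have := hb.le_one (k + 1)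
      have := hb.le_one (k + 2)
      simp only [add_assoc, Nat.reduceAdd] at *
      omega

lemma add_single {K k : ℕ} (hb : IsZeckendorfDigits b) (hK : ∀ j, K ≤ j → b j = 0)
    (hk : K < k) : IsZeckendorfDigits (b + Pi.single k 1) where
  le_one j := by
    rcases eq_or_ne j k with rfl | hj
    · simp [hK j hk.le]
    · simpa [hj] using hb.le_one j
  not_consecutive j := by
    rcases eq_or_ne j k with rfl | hj
    · simp [hK (j + 1) (by omega)]
    rcases eq_or_ne (j + 1) k with rfl | hj'
    · simp [hK j (by omega)]
    · simpa [hj, hj'] using hb.not_consecutive j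

end IsZeckendorfDigits

namespace IsZeckendorf

variable {a : ℕ → ℕ → ℕ}

lemma digits (ha : IsZeckendorf a) (m : ℕ) : IsZeckendorfDigits (a m) :=
  ⟨(ha m).2.1, (ha m).2.2.1⟩

lemma s_eq_sum_Icc (ha : IsZeckendorf a) {m N : ℕ} (h : m ≤ N) :
    s a m = ∑ j ∈ Icc 1 N, a m j :=
  (sum_Icc_eq_of_eq_zero (ha m).2.2.2.1 h).symm

lemma sum_Icc_mul_F (ha : IsZeckendorf a) {m N : ℕ} (h : m ≤ N) :
    ∑ j ∈ Icc 1 N, a m j * F j = m :=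
  (sum_Icc_eq_of_eq_zero (fun j hj => by simp [(ha m).2.2.2.1 j hj]) h).trans (ha m).2.2.2.2.symm

lemma F_le_of_digit_eq_one (ha : IsZeckendorf a) {m j : ℕ} (h : a m j = 1) : F j ≤ m := by
  have hj : j ∈ Icc 1 m := by
    rw [mem_Icc]
    constructor
    · by_contra! hj
      simp [Nat.lt_one_iff.mp hj, (ha m).1] at h
    · by_contra! hj
      simp [(ha m).2.2.2.1 j hj] at h
  calc F j = a m j * F j := by rw [h, one_mul]
    _ ≤ ∑ i ∈ Icc 1 m, a m i * F i :=
      single_le_sum (f := fun i => a m i * F i) (fun _ _ => Nat.zero_le _) hj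
    _ = m := ha.sum_Icc_mul_F le_rfl

lemma digit_eq_zero_of_lt (ha : IsZeckendorf a) {r A : ℕ} (hr : r < F A) {j : ℕ}
    (hj : A ≤ j) : a r j = 0 := by
  by_contra h
  have := ha.F_le_of_digit_eq_one (m := r) (j := j) (by have := (ha.digits r).le_one j; omega)
  have := F_mono hj
  omega

lemma s_eq_of_digits (ha : IsZeckendorf a) {b : ℕ → ℕ} {m : ℕ} (hb : IsZeckendorfDigits b)
    (h : ∑ j ∈ Icc 1 m, b j * F j = m) : s a m = ∑ j ∈ Icc 1 m, b j :=
  sum_congr rfl <| (ha.digits m).eq_of_sum_mul_F_eq hb m <| by rw [h, ha.sum_Icc_mul_F le_rfl]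

lemma s_le_half_of_lt (ha : IsZeckendorf a) {r A : ℕ} (hr : r < F A) : s a r ≤ A / 2 :=
  calc s a r = ∑ j ∈ Icc 1 (max r (A - 1)), a r j := ha.s_eq_sum_Icc (le_max_left _ _)
    _ = ∑ j ∈ Icc 1 (A - 1), a r j :=
      sum_Icc_eq_of_eq_zero (fun j hj => ha.digit_eq_zero_of_lt hr (by omega)) (le_max_right _ _)
    _ ≤ (A - 1 + 1) / 2 := (ha.digits r).sum_le _
    _ ≤ A / 2 := by omega

end IsZeckendorf

theorem few_summands_above_F2n_general
    (a : ℕ → ℕ → ℕ) (ha : IsZeckendorf a)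
    (n : ℕ) (hn : 3 ≤ n) (A : ℕ) (hA2 : A ≤ n - 1) :
    (∀ m : ℕ, F (2 * n) + F (n + 1) ≤ m → m < F (2 * n) + F (n + 1) + F A →
      s a m = 2 + s a (m - F (2 * n) - F (n + 1)) ∧
      s a m ≤ 2 + ((A - 1) + 1) / 2) ∧
    (∀ r : ℕ, r < F A → s a r ≤ ((A - 1) + 1) / 2) := by
  have hsmall (r : ℕ) (hr : r < F A) : s a r ≤ (A - 1 + 1) / 2 :=
    (ha.s_le_half_of_lt hr).trans (by omega)
  refine ⟨fun m hm₁ hm₂ => ?_, hsmall⟩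
  set r := m - F (2 * n) - F (n + 1)
  have hr : r < F A := by omega
  have h2n : 2 * n ≤ F (2 * n) :=
    (Nat.le_fib_self (n := 2 * n + 1) (by omega)).trans' (by omega)
  have hn₁ : n + 1 ∈ Icc 1 m := mem_Icc.mpr ⟨by omega, by omega⟩
  have hn₂ : 2 * n ∈ Icc 1 m := mem_Icc.mpr ⟨by omega, by omega⟩
  have hr_zero (j : ℕ) (hj : A ≤ j) : a r j = 0 := ha.digit_eq_zero_of_lt hr hj
  set b : ℕ → ℕ := a r + Pi.single (n + 1) 1 + Pi.single (2 * n) 1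
  -- `n ≥ 3` keeps the digit at `2 n` clear of the one at `n + 1`.
  have hb : IsZeckendorfDigits b :=
    ((ha.digits r).add_single hr_zero (show A < n + 1 by omega)).add_single (K := n + 2)
      (fun j hj => by simp [hr_zero j (by omega), show j ≠ n + 1 by omega]) (by omega)
  have hsum : ∑ j ∈ Icc 1 m, b j * F j = m := by
    rw [sum_add_single_mul hn₂, sum_add_single_mul hn₁, ha.sum_Icc_mul_F (by omega)]
    omega
  have hs : s a m = s a r + 1 + 1 := by
    rw [ha.s_eq_of_digits hb hsum, sum_add_single hn₂, sum_add_single hn₁,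
      ← ha.s_eq_sum_Icc (by omega)]
  exact ⟨by omega, by have := hsmall r hr; omega⟩

/-- integers in `[F (2n) + F (n+1), F (2n) + F (n+1) + F a)` have
`s(m) = 2 + s(m - F (2n) - F (n+1)) ≤ 2 + ⌈(a-1)/2⌉`; in particular every `r < F a`
has `s(r) ≤ ⌈(a-1)/2⌉`. -/
theorem few_summands_above_F2n
    (a : ℕ → ℕ → ℕ) (ha : IsZeckendorf a)
    (n : ℕ) (hn : 3 ≤ n) (A : ℕ) (hA1 : 1 ≤ A) (hA2 : A ≤ n - 1) :
    (∀ m : ℕ, F (2 * n) + F (n + 1) ≤ m → m < F (2 * n) + F (n + 1) + F A →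
      s a m = 2 + s a (m - F (2 * n) - F (n + 1)) ∧
      s a m ≤ 2 + ((A - 1) + 1) / 2) ∧
    (∀ r : ℕ, r < F A → s a r ≤ ((A - 1) + 1) / 2) :=
  few_summands_above_F2n_general a ha n hn A hA2
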